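/- Let 0 ≤ ε < 1/2, let q ≥ 1, and let g : (ℤ/qℤ)* → ℂ be a function with g(1) = 1 and |g(ab) − g(a)g(b)| ≤ ε for all a, b coprime to q. Then there exists a Dirichlet character χ (mod q) such that |χ(a) − g(a)| ≤ ε/(1 − 2ε) for all a with (a,q) = 1. -/

import Mathlib

/-!
Write `T χ = ∑ₐ g a · conj (χ a)` and `N = φ(q)`. Substituting `a ↦ b a` shows that the Fourier
coefficient at `χ` of the defect `a ↦ g (b a) - g b · g a` is `(χ b - g b) · T χ`. Bounding the
defect pointwise gives `|χ b - g b| · |T χ| ≤ N ε`, so it suffices to find `χ` with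
`|T χ| ≥ (1 - 2ε) N`. Parseval applied to the defect gives
`∑_χ |T χ|² |χ b - g b|² ≤ N² ε²` for each `b`; summing over `b` and averaging over `χ` with the
weights `|T χ|²`, whose total is `N ∑ |g|²`, yields a `χ` for which
`∑_b |χ b - g b|² = N + ∑ |g|² - 2 Re T χ` is small. Since `|g| ≥ 1 - ε` everywhere (compare with
the maximum of `|g|`), this forces `Re T χ ≥ (1 - 2ε) N`.
-/

open Complex ComplexConjugate Finset

lemma one_sub_le_norm_of_norm_map_mul_sub_le {G : Type*} [Group G] [Finite G] {g : G → ℂ}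
    {ε : ℝ} (h1 : g 1 = 1) (hg : ∀ a b, ‖g (a * b) - g a * g b‖ ≤ ε) (b : G) :
    1 - ε ≤ ‖g b‖ := by
  cases nonempty_fintype G
  obtain ⟨m, -, hm⟩ := exists_max_image univ (fun a ↦ ‖g a‖) univ_nonempty
  have hm1 : 1 ≤ ‖g m‖ := by simpa [h1] using hm 1 (mem_univ _)
  have hmb : ‖g m‖ ≤ ‖g m‖ * ‖g b‖ + ε :=
    calc ‖g m‖ ≤ ‖g (m * b⁻¹) * g b‖ + ‖g (m * b⁻¹ * b) - g (m * b⁻¹) * g b‖ := by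
          simpa using norm_le_insert' (g m) (g (m * b⁻¹) * g b)
      _ ≤ ‖g m‖ * ‖g b‖ + ε := by
          rw [norm_mul]
          gcongr
          · exact hm _ (mem_univ _)
          · exact hg _ _
  have hε : 0 ≤ ε := (norm_nonneg _).trans (hg 1 1)
  by_contra! hb
  nlinarith [mul_le_mul_of_nonneg_right hm1 (by linarith : 0 ≤ 1 - ‖g b‖)]

namespace DirichletCharacter

variable {q : ℕ}

lemma conj_apply_unit (χ : DirichletCharacter ℂ q) (a : (ZMod q)ˣ) :
    conj (χ a) = χ (a : ZMod q)⁻¹ := by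
  rw [← inv_eq_conj (χ.unit_norm_eq_one a), ZMod.inv_coe_unit, map_units_inv]

lemma normSq_apply_unit (χ : DirichletCharacter ℂ q) (a : (ZMod q)ˣ) : normSq (χ a) = 1 := by
  rw [normSq_eq_norm_sq, χ.unit_norm_eq_one, one_pow]

variable [NeZero q]

lemma sum_conj_apply_mul_apply (a b : (ZMod q)ˣ) :
    ∑ χ : DirichletCharacter ℂ q, conj (χ a) * χ b = if a = b then (q.totient : ℂ) else 0 := by
  simp only [conj_apply_unit, sum_char_inv_mul_char_eq ℂ a.isUnit, Units.val_inj]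

noncomputable def fourierCoeff (χ : DirichletCharacter ℂ q) (g : (ZMod q)ˣ → ℂ) : ℂ :=
  ∑ a, g a * conj (χ a)

lemma fourierCoeff_comp_mul_left (χ : DirichletCharacter ℂ q) (g : (ZMod q)ˣ → ℂ)
    (b : (ZMod q)ˣ) : χ.fourierCoeff (fun a ↦ g (b * a)) = χ b * χ.fourierCoeff g := by
  have hb : χ b * conj (χ b) = 1 := by rw [mul_conj, normSq_apply_unit, ofReal_one]
  rw [fourierCoeff, fourierCoeff, mul_sum]
  refine Fintype.sum_equiv (Equiv.mulLeft b) _ _ fun a ↦ ?_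
  simp only [Equiv.coe_mulLeft, Units.val_mul, map_mul]
  linear_combination (-(g (b * a) * conj (χ a))) * hb

lemma fourierCoeff_mul_left_sub_mul (χ : DirichletCharacter ℂ q) (g : (ZMod q)ˣ → ℂ)
    (b : (ZMod q)ˣ) :
    χ.fourierCoeff (fun a ↦ g (b * a) - g b * g a) = (χ b - g b) * χ.fourierCoeff g := by
  have := χ.fourierCoeff_comp_mul_left g b
  simp only [fourierCoeff, sub_mul, sum_sub_distrib, mul_assoc, ← mul_sum] at this ⊢
  rw [this]

lemma sum_normSq_fourierCoeff (g : (ZMod q)ˣ → ℂ) :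
    ∑ χ : DirichletCharacter ℂ q, normSq (χ.fourierCoeff g) =
      q.totient * ∑ a, normSq (g a) := by
  apply ofReal_injective
  push_cast
  calc ∑ χ : DirichletCharacter ℂ q, (normSq (χ.fourierCoeff g) : ℂ)
      = ∑ χ : DirichletCharacter ℂ q, ∑ a, ∑ b, g a * conj (g b) * (conj (χ a) * χ b) := by
        refine sum_congr rfl fun χ _ ↦ ?_
        rw [← mul_conj, fourierCoeff, map_sum, sum_mul_sum]
        refine sum_congr rfl fun a _ ↦ sum_congr rfl fun b _ ↦ ?_
        rw [map_mul, conj_conj]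
        ring
    _ = ∑ a, ∑ b, g a * conj (g b) * ∑ χ : DirichletCharacter ℂ q, conj (χ a) * χ b := by
        simp only [mul_sum]
        rw [sum_comm]
        exact sum_congr rfl fun a _ ↦ sum_comm
    _ = q.totient * ∑ a, (normSq (g a) : ℂ) := by
        simp [sum_conj_apply_mul_apply, mul_sum, mul_conj, mul_comm]

lemma sum_normSq_sub_apply (χ : DirichletCharacter ℂ q) (g : (ZMod q)ˣ → ℂ) :
    ∑ b : (ZMod q)ˣ, normSq (χ b - g b) =
      q.totient + ∑ b, normSq (g b) - 2 * (χ.fourierCoeff g).re := by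
  have hre : ∀ b : (ZMod q)ˣ, (χ b * conj (g b)).re = (g b * conj (χ b)).re := fun b ↦ by
    rw [← conj_re, map_mul, conj_conj, mul_comm]
  simp only [normSq_sub, normSq_apply_unit, hre, sum_sub_distrib, sum_add_distrib, sum_const,
    card_univ, ZMod.card_units_eq_totient, nsmul_eq_mul, mul_one, ← mul_sum, fourierCoeff, re_sum]

variable {g : (ZMod q)ˣ → ℂ} {ε : ℝ}

lemma norm_sub_mul_norm_fourierCoeff_le (hg : ∀ a b, ‖g (a * b) - g a * g b‖ ≤ ε)
    (χ : DirichletCharacter ℂ q) (b : (ZMod q)ˣ) :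
    ‖χ b - g b‖ * ‖χ.fourierCoeff g‖ ≤ q.totient * ε := by
  rw [← norm_mul, ← fourierCoeff_mul_left_sub_mul, fourierCoeff]
  calc _ ≤ ∑ a, ‖(g (b * a) - g b * g a) * conj (χ a)‖ := norm_sum_le _ _
    _ ≤ ∑ _a : (ZMod q)ˣ, ε := sum_le_sum fun a _ ↦ by
        rw [norm_mul, norm_conj, unit_norm_eq_one, mul_one]
        exact hg b a
    _ = q.totient * ε := by simp [ZMod.card_units_eq_totient]

lemma sum_normSq_fourierCoeff_mul_normSq_sub_le (hg : ∀ a b, ‖g (a * b) - g a * g b‖ ≤ ε)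
    (b : (ZMod q)ˣ) :
    ∑ χ : DirichletCharacter ℂ q, normSq (χ.fourierCoeff g) * normSq (χ b - g b) ≤
      q.totient ^ 2 * ε ^ 2 := by
  have hdefect : ∑ a, normSq (g (b * a) - g b * g a) ≤ q.totient * ε ^ 2 :=
    calc _ ≤ ∑ _a : (ZMod q)ˣ, ε ^ 2 := sum_le_sum fun a _ ↦ by
          rw [normSq_eq_norm_sq]
          exact pow_le_pow_left₀ (norm_nonneg _) (hg b a) 2
      _ = q.totient * ε ^ 2 := by simp [ZMod.card_units_eq_totient]
  calc _ = ∑ χ : DirichletCharacter ℂ q,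
        normSq (χ.fourierCoeff fun a ↦ g (b * a) - g b * g a) := by
        simp only [fourierCoeff_mul_left_sub_mul, normSq_mul, mul_comm]
    _ = q.totient * ∑ a, normSq (g (b * a) - g b * g a) := sum_normSq_fourierCoeff _
    _ ≤ q.totient * (q.totient * ε ^ 2) := by gcongr
    _ = q.totient ^ 2 * ε ^ 2 := by ring

lemma sum_normSq_fourierCoeff_mul_sum_normSq_sub_le
    (hg : ∀ a b, ‖g (a * b) - g a * g b‖ ≤ ε) :
    ∑ χ : DirichletCharacter ℂ q, normSq (χ.fourierCoeff g) * ∑ b : (ZMod q)ˣ, normSq (χ b - g b) ≤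
      q.totient * (q.totient ^ 2 * ε ^ 2) := by
  simp only [mul_sum]
  rw [sum_comm]
  calc _ ≤ ∑ _b : (ZMod q)ˣ, (q.totient : ℝ) ^ 2 * ε ^ 2 :=
        sum_le_sum fun b _ ↦ sum_normSq_fourierCoeff_mul_normSq_sub_le hg b
    _ = q.totient * (q.totient ^ 2 * ε ^ 2) := by simp [ZMod.card_units_eq_totient]

lemma totient_mul_one_sub_sq_le_sum_normSq (hε : ε ≤ 1) (h1 : g 1 = 1)
    (hg : ∀ a b, ‖g (a * b) - g a * g b‖ ≤ ε) :
    q.totient * (1 - ε) ^ 2 ≤ ∑ a, normSq (g a) :=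
  calc q.totient * (1 - ε) ^ 2 = ∑ _a : (ZMod q)ˣ, (1 - ε) ^ 2 := by
        simp [ZMod.card_units_eq_totient]
    _ ≤ ∑ a, normSq (g a) := sum_le_sum fun a _ ↦ by
        rw [normSq_eq_norm_sq]
        exact pow_le_pow_left₀ (by linarith) (one_sub_le_norm_of_norm_map_mul_sub_le h1 hg a) 2

lemma exists_norm_fourierCoeff_ge (hε0 : 0 ≤ ε) (hε : ε < 1 / 2) (h1 : g 1 = 1)
    (hg : ∀ a b, ‖g (a * b) - g a * g b‖ ≤ ε) :
    ∃ χ : DirichletCharacter ℂ q, (1 - 2 * ε) * q.totient ≤ ‖χ.fourierCoeff g‖ := by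
  set N : ℝ := (q.totient : ℝ)
  set S := ∑ a, normSq (g a)
  set w := fun χ : DirichletCharacter ℂ q ↦ normSq (χ.fourierCoeff g)
  set W := fun χ : DirichletCharacter ℂ q ↦ ∑ b : (ZMod q)ˣ, normSq (χ b - g b)
  have hN : 0 < N := by simpa [N] using Nat.totient_pos.2 (NeZero.pos q)
  have hS : N * (1 - ε) ^ 2 ≤ S := totient_mul_one_sub_sq_le_sum_normSq (by linarith) h1 hg
  have hSpos : 0 < S := by
    have : 0 < 1 - ε := by linarith
    exact (by positivity : 0 < N * (1 - ε) ^ 2).trans_le hS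
  have hw : ∑ χ, w χ = N * S := sum_normSq_fourierCoeff g
  have hwpos : 0 < ∑ χ, w χ := hw ▸ mul_pos hN hSpos
  -- weighted pigeonhole: some `W χ` is at most the `w`-weighted mean of `W`
  obtain ⟨χ, -, hχ⟩ := (concaveOn_id convex_univ).exists_le_of_centerMass (t := univ) (w := w)
    (p := W) (fun χ _ ↦ normSq_nonneg _) hwpos (fun _ _ ↦ Set.mem_univ _)
  rw [id, id, centerMass, smul_eq_mul, le_inv_mul_iff₀ hwpos, hw] at hχ
  have hWχ : S * W χ ≤ N ^ 2 * ε ^ 2 := le_of_mul_le_mul_left (by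
    simpa only [mul_assoc] using hχ.trans (sum_normSq_fourierCoeff_mul_sum_normSq_sub_le hg)) hN
  simp only [W, sum_normSq_sub_apply] at hWχ
  refine ⟨χ, le_trans ?_ (re_le_norm _)⟩
  by_contra! hlt
  have hgap : N * (ε ^ 2 + 2 * ε) < N + S - 2 * (χ.fourierCoeff g).re := by nlinarith
  -- the difference of the two sides is `ε (ε³ + 2 - 4ε)`
  have hpoly : ε ^ 2 ≤ (1 - ε) ^ 2 * (ε ^ 2 + 2 * ε) := by
    have : (0 : ℝ) ≤ 2 - 4 * ε := by linarith
    nlinarith [mul_nonneg hε0 (add_nonneg (pow_nonneg hε0 3) this)]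
  nlinarith [mul_lt_mul_of_pos_left hgap hSpos,
    mul_le_mul_of_nonneg_right hS (by positivity : 0 ≤ N * (ε ^ 2 + 2 * ε))]

end DirichletCharacter

theorem stmt_19 :
    ∀ (ε : ℝ), 0 ≤ ε → ε < 1 / 2 →
    ∀ (q : ℕ), 1 ≤ q →
    ∀ (g : (ZMod q)ˣ → ℂ), g 1 = 1 →
    (∀ a b : (ZMod q)ˣ, ‖g (a * b) - g a * g b‖ ≤ ε) →
    ∃ χ : DirichletCharacter ℂ q,
      ∀ a : (ZMod q)ˣ, ‖χ (a : ZMod q) - g a‖ ≤ ε / (1 - 2 * ε) := by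
  intro ε hε0 hε q hq g h1 hg
  have : NeZero q := ⟨by omega⟩
  obtain ⟨χ, hχ⟩ := DirichletCharacter.exists_norm_fourierCoeff_ge hε0 hε h1 hg
  refine ⟨χ, fun a ↦ ?_⟩
  have hN : (0 : ℝ) < q.totient := by exact_mod_cast Nat.totient_pos.2 hq
  rw [le_div_iff₀ (by linarith)]
  refine le_of_mul_le_mul_right ?_ hN
  calc ‖χ a - g a‖ * (1 - 2 * ε) * q.totient
      ≤ ‖χ a - g a‖ * ‖χ.fourierCoeff g‖ := by
        rw [mul_assoc]
        exact mul_le_mul_of_nonneg_left hχ (norm_nonneg _)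
    _ ≤ ε * q.totient := by
        rw [mul_comm ε]
        exact χ.norm_sub_mul_norm_fourierCoeff_le hg a
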